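/- Let Z be a metric continuum, f : Z → [0,1] continuous, P = ({1/4} × [0, 2/3]) ∪ ([1/4, 1/2] × {2/3}) ∪ ({1/2} × [1/3, 2/3]) ∪ ([1/2, 3/4] × {1/3}) ∪ ({3/4} × [1/3, 1]) ⊆ [0,1] × [0,1], X⁺ = {(t, x) ∈ [0,1] × Z : (t, f(x)) ∈ P}, π : X⁺ → Z the projection π(t, x) = x, and let C be the (unique) connected component of X⁺ with π(C) = Z. Then for every nonempty closed connected subset A of Z there exists a connected subset C(A) ⊆ C such that π(C(A)) = A. -/
import Mathlib


open Set

/-- The polygonal arc `P` in the unit square. -/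
def Pset : Set (ℝ × ℝ) :=
  ({(1:ℝ)/4} ×ˢ Icc (0:ℝ) (2/3)) ∪ (Icc ((1:ℝ)/4) (1/2) ×ˢ {(2:ℝ)/3}) ∪
  ({(1:ℝ)/2} ×ˢ Icc ((1:ℝ)/3) (2/3)) ∪ (Icc ((1:ℝ)/2) (3/4) ×ˢ {(1:ℝ)/3}) ∪
  ({(3:ℝ)/4} ×ˢ Icc ((1:ℝ)/3) 1)

/-- `X⁺ = {(t, x) ∈ [0,1] × Z : (t, f(x)) ∈ P}`. -/
def Xplus {Z : Type*} (f : Z → ℝ) : Set (ℝ × Z) :=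
  {p | p.1 ∈ Icc (0:ℝ) 1 ∧ (p.1, f p.2) ∈ Pset}

lemma mem_Pset_iff {t y : ℝ} : (t, y) ∈ Pset ↔
    (t = 1/4 ∧ 0 ≤ y ∧ y ≤ 2/3) ∨ (1/4 ≤ t ∧ t ≤ 1/2 ∧ y = 2/3) ∨
    (t = 1/2 ∧ 1/3 ≤ y ∧ y ≤ 2/3) ∨ (1/2 ≤ t ∧ t ≤ 3/4 ∧ y = 1/3) ∨
    (t = 3/4 ∧ 1/3 ≤ y ∧ y ≤ 1) := by
  simp only [Pset, mem_union, mem_prod, mem_singleton_iff, mem_Icc]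
  tauto

lemma mem_P_quarter {y : ℝ} : ((1/4 : ℝ), y) ∈ Pset ↔ 0 ≤ y ∧ y ≤ 2/3 := by
  rw [mem_Pset_iff]
  constructor
  · rintro (⟨_,h⟩|⟨_,_,h⟩|⟨h,_⟩|⟨h,_,_⟩|⟨h,_⟩) <;> constructor <;> linarith
  · exact fun h => Or.inl ⟨rfl, h⟩

lemma mem_P_half {y : ℝ} : ((1/2 : ℝ), y) ∈ Pset ↔ 1/3 ≤ y ∧ y ≤ 2/3 := by
  rw [mem_Pset_iff]
  constructor
  · rintro (⟨h,_⟩|⟨_,_,h⟩|⟨_,h⟩|⟨_,_,h⟩|⟨h,_⟩) <;> constructor <;> linarith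
  · exact fun h => Or.inr (Or.inr (Or.inl ⟨rfl, h⟩))

lemma mem_P_tq {y : ℝ} : ((3/4 : ℝ), y) ∈ Pset ↔ 1/3 ≤ y ∧ y ≤ 1 := by
  rw [mem_Pset_iff]
  constructor
  · rintro (⟨h,_⟩|⟨_,h,_⟩|⟨h,_⟩|⟨_,_,h⟩|⟨_,h⟩) <;> constructor <;> linarith
  · exact fun h => Or.inr (Or.inr (Or.inr (Or.inr ⟨rfl, h⟩)))

lemma P_t_lt_third {t y : ℝ} (h : (t, y) ∈ Pset) (hy : y < 1/3) : t = 1/4 := by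
  rw [mem_Pset_iff] at h
  rcases h with ⟨h,_⟩|⟨_,_,h⟩|⟨_,h,_⟩|⟨_,_,h⟩|⟨_,h,_⟩ <;> first | exact h | linarith

lemma P_t_gt_twothird {t y : ℝ} (h : (t, y) ∈ Pset) (hy : 2/3 < y) : t = 3/4 := by
  rw [mem_Pset_iff] at h
  rcases h with ⟨_,_,h⟩|⟨_,_,h⟩|⟨_,_,h⟩|⟨_,_,h⟩|⟨h,_⟩ <;> first | exact h | linarith

lemma P_seg13 {s : ℝ} (h1 : 1/2 ≤ s) (h2 : s ≤ 3/4) : (s, (1/3 : ℝ)) ∈ Pset := by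
  rw [mem_Pset_iff]; exact Or.inr (Or.inr (Or.inr (Or.inl ⟨h1, h2, rfl⟩)))

lemma P_seg23 {s : ℝ} (h1 : 1/4 ≤ s) (h2 : s ≤ 1/2) : (s, (2/3 : ℝ)) ∈ Pset := by
  rw [mem_Pset_iff]; exact Or.inr (Or.inl ⟨h1, h2, rfl⟩)

lemma P_cases_t {t y : ℝ} (h : (t, y) ∈ Pset) :
    t = 1/4 ∨ t = 1/2 ∨ t = 3/4 ∨ (1/4 < t ∧ t < 1/2 ∧ y = 2/3) ∨
    (1/2 < t ∧ t < 3/4 ∧ y = 1/3) := by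
  rw [mem_Pset_iff] at h
  rcases h with ⟨h,_⟩|⟨h1,h2,h3⟩|⟨h,_⟩|⟨h1,h2,h3⟩|⟨h,_⟩
  · exact Or.inl h
  · rcases eq_or_lt_of_le h1 with h1|h1
    · exact Or.inl h1.symm
    · rcases eq_or_lt_of_le h2 with h2|h2
      · exact Or.inr (Or.inl h2)
      · exact Or.inr (Or.inr (Or.inr (Or.inl ⟨h1, h2, h3⟩)))
  · exact Or.inr (Or.inl h)
  · rcases eq_or_lt_of_le h1 with h1|h1
    · exact Or.inr (Or.inl h1.symm)
    · rcases eq_or_lt_of_le h2 with h2|h2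
      · exact Or.inr (Or.inr (Or.inl h2))
      · exact Or.inr (Or.inr (Or.inr (Or.inr ⟨h1, h2, h3⟩)))
  · exact Or.inr (Or.inr (Or.inl h))

lemma isClosed_Pset : IsClosed Pset := by
  unfold Pset
  repeat' apply IsClosed.union
  all_goals first
    | exact isClosed_singleton.prod isClosed_Icc
    | exact isClosed_Icc.prod isClosed_singleton

lemma isClosed_Xplus {Z : Type*} [TopologicalSpace Z] {f : Z → ℝ} (hf : Continuous f) :
    IsClosed (Xplus f) := by
  have h1 : IsClosed {p : ℝ × Z | p.1 ∈ Icc (0:ℝ) 1} := isClosed_Icc.preimage continuous_fst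
  have h2 : IsClosed {p : ℝ × Z | (p.1, f p.2) ∈ Pset} :=
    isClosed_Pset.preimage (continuous_fst.prodMk (hf.comp continuous_snd))
  exact h1.inter h2
open Topology Filter

lemma ev_within {α : Type*} [TopologicalSpace α] {x : α} {A s : Set α} (h : s ∈ nhds x) :
    ∀ᶠ y in nhdsWithin x A, y ∈ s :=
  Filter.Eventually.filter_mono nhdsWithin_le_nhds
    (Filter.eventually_iff.mpr (by simpa using h))

def Wset {Z : Type*} (f : Z → ℝ) (A : Set Z) : Set (ℝ × Z) :=
  {p | p ∈ Xplus f ∧ p.2 ∈ A}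

noncomputable def sIn {Z : Type*} (V : Set (ℝ × Z)) (t : ℝ) (x : Z) : Bool :=
  @decide ((t, x) ∈ V) (Classical.propDecidable _)

lemma sIn_congr {Z : Type*} {V : Set (ℝ × Z)} {t t' : ℝ} {x x' : Z}
    (h : ((t, x) ∈ V ↔ (t', x') ∈ V)) : sIn V t x = sIn V t' x' := by
  simp only [sIn]
  exact @Bool.decide_congr _ _ (Classical.propDecidable _) (Classical.propDecidable _) h

lemma sIn_false {Z : Type*} {V : Set (ℝ × Z)} {t : ℝ} {x : Z} (h : (t, x) ∉ V) :
    sIn V t x = false := by simp [sIn, h]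

lemma sIn_true {Z : Type*} {V : Set (ℝ × Z)} {t : ℝ} {x : Z} (h : (t, x) ∈ V) :
    sIn V t x = true := by simp [sIn, h]

noncomputable def nuV {Z : Type*} (V : Set (ℝ × Z)) (x : Z) : Bool :=
  Bool.xor (sIn V (1/4) x) (Bool.xor (sIn V (1/2) x) (sIn V (3/4) x))

section Main
variable {Z : Type*} [MetricSpace Z] {f : Z → ℝ}

lemma mem_W_quarter (hf01 : ∀ z, f z ∈ Icc (0:ℝ) 1) {A : Set Z} {x : Z}
    (hx : x ∈ A) (h : f x ≤ 2/3) : ((1/4 : ℝ), x) ∈ Wset f A :=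
  ⟨⟨⟨by norm_num, by norm_num⟩, mem_P_quarter.mpr ⟨(hf01 x).1, h⟩⟩, hx⟩

lemma mem_W_half {A : Set Z} {x : Z}
    (hx : x ∈ A) (h1 : 1/3 ≤ f x) (h2 : f x ≤ 2/3) : ((1/2 : ℝ), x) ∈ Wset f A :=
  ⟨⟨⟨by norm_num, by norm_num⟩, mem_P_half.mpr ⟨h1, h2⟩⟩, hx⟩

lemma mem_W_tq (hf01 : ∀ z, f z ∈ Icc (0:ℝ) 1) {A : Set Z} {x : Z}
    (hx : x ∈ A) (h1 : 1/3 ≤ f x) : ((3/4 : ℝ), x) ∈ Wset f A :=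
  ⟨⟨⟨by norm_num, by norm_num⟩, mem_P_tq.mpr ⟨h1, (hf01 x).2⟩⟩, hx⟩

theorem parity_onto (hf : Continuous f)
    (hf01 : ∀ z, f z ∈ Icc (0:ℝ) 1) {A : Set Z} (hA : IsPreconnected A)
    {V : Set (ℝ × Z)} (hVW : V ⊆ Wset f A) (hVcl : IsClosed V)
    (hWVcl : IsClosed (Wset f A \ V)) {x₀ : Z} (hx₀ : x₀ ∈ A) (hnu : nuV V x₀ = true) :
    ∀ x ∈ A, ∃ t, (t, x) ∈ V := by
  -- same-side principle for preconnected subsets of W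
  have same : ∀ S : Set (ℝ × Z), IsPreconnected S → S ⊆ Wset f A →
      ∀ a ∈ S, ∀ b ∈ S, a ∈ V → b ∈ V := by
    intro S hS hSW a ha b hb haV
    by_contra hbV
    obtain ⟨z, _, ⟨hzV, _, hzV'⟩⟩ := (isPreconnected_closed_iff.mp hS) V (Wset f A \ V) hVcl hWVcl
      (fun z hz => (em (z ∈ V)).imp id (fun h' => ⟨hSW hz, h'⟩))
      ⟨a, ha, haV⟩ ⟨b, hb, hSW hb, hbV⟩
    exact hzV' hzV
  -- glue along the horizontal segments
  have glue13 : ∀ x ∈ A, f x = 1/3 → (((1/2 : ℝ), x) ∈ V ↔ ((3/4 : ℝ), x) ∈ V) := by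
    intro x hx hfx
    have hSc : IsPreconnected ((fun s => (s, x)) '' Icc (1/2 : ℝ) (3/4)) :=
      (isPreconnected_Icc).image _ (Continuous.continuousOn (by continuity))
    have hSW : (fun s => (s, x)) '' Icc (1/2 : ℝ) (3/4) ⊆ Wset f A := by
      rintro _ ⟨s, hs, rfl⟩
      exact ⟨⟨⟨by linarith [hs.1], by linarith [hs.2]⟩, by rw [hfx]; exact P_seg13 hs.1 hs.2⟩, hx⟩
    have h12 : ((1/2 : ℝ), x) ∈ (fun s => (s, x)) '' Icc (1/2 : ℝ) (3/4) :=
      ⟨1/2, ⟨le_refl _, by norm_num⟩, rfl⟩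
    have h34 : ((3/4 : ℝ), x) ∈ (fun s => (s, x)) '' Icc (1/2 : ℝ) (3/4) :=
      ⟨3/4, ⟨by norm_num, le_refl _⟩, rfl⟩
    exact ⟨fun h => same _ hSc hSW _ h12 _ h34 h, fun h => same _ hSc hSW _ h34 _ h12 h⟩
  have glue23 : ∀ x ∈ A, f x = 2/3 → (((1/4 : ℝ), x) ∈ V ↔ ((1/2 : ℝ), x) ∈ V) := by
    intro x hx hfx
    have hSc : IsPreconnected ((fun s => (s, x)) '' Icc (1/4 : ℝ) (1/2)) :=
      (isPreconnected_Icc).image _ (Continuous.continuousOn (by continuity))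
    have hSW : (fun s => (s, x)) '' Icc (1/4 : ℝ) (1/2) ⊆ Wset f A := by
      rintro _ ⟨s, hs, rfl⟩
      exact ⟨⟨⟨by linarith [hs.1], by linarith [hs.2]⟩, by rw [hfx]; exact P_seg23 hs.1 hs.2⟩, hx⟩
    have h14 : ((1/4 : ℝ), x) ∈ (fun s => (s, x)) '' Icc (1/4 : ℝ) (1/2) :=
      ⟨1/4, ⟨le_refl _, by norm_num⟩, rfl⟩
    have h12 : ((1/2 : ℝ), x) ∈ (fun s => (s, x)) '' Icc (1/4 : ℝ) (1/2) :=
      ⟨1/2, ⟨by norm_num, le_refl _⟩, rfl⟩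
    exact ⟨fun h => same _ hSc hSW _ h14 _ h12 h, fun h => same _ hSc hSW _ h12 _ h14 h⟩
  -- local constancy of a single strand
  have strand_loc : ∀ (t : ℝ) (x : Z), (t, x) ∈ Wset f A →
      ∀ᶠ y in 𝓝 x, ((t, y) ∈ Wset f A → (((t, y) ∈ V) ↔ ((t, x) ∈ V))) := by
    intro t x hxW
    by_cases hxV : (t, x) ∈ V
    · have hcl : IsClosed {y : Z | (t, y) ∈ Wset f A \ V} :=
        hWVcl.preimage (Continuous.prodMk_right t)
      have hmem : x ∈ {y : Z | (t, y) ∈ Wset f A \ V}ᶜ := fun h => h.2 hxV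
      filter_upwards [hcl.isOpen_compl.mem_nhds hmem] with y hy hyW
      refine ⟨fun _ => hxV, fun _ => ?_⟩
      by_contra h
      exact hy ⟨hyW, h⟩
    · have hcl : IsClosed {y : Z | (t, y) ∈ V} := hVcl.preimage (Continuous.prodMk_right t)
      have hmem : x ∈ {y : Z | (t, y) ∈ V}ᶜ := hxV
      filter_upwards [hcl.isOpen_compl.mem_nhds hmem] with y hy _
      exact iff_of_false hy hxV
  -- neighborhood glue at level 1/3
  have nglue13 : ∀ x ∈ A, f x = 1/3 →
      ∀ᶠ y in 𝓝[A] x, (((1/2 : ℝ), y) ∈ V ↔ ((3/4 : ℝ), y) ∈ V) := by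
    intro x hx hfx
    have hg := glue13 x hx hfx
    have hB1 : IsClosed {y : Z | ((1/2 : ℝ), y) ∈ V ∧ ((3/4 : ℝ), y) ∈ Wset f A \ V} :=
      (hVcl.preimage (Continuous.prodMk_right (1/2 : ℝ))).inter
        (hWVcl.preimage (Continuous.prodMk_right (3/4 : ℝ)))
    have hB2 : IsClosed {y : Z | ((3/4 : ℝ), y) ∈ V ∧ ((1/2 : ℝ), y) ∈ Wset f A \ V} :=
      (hVcl.preimage (Continuous.prodMk_right (3/4 : ℝ))).inter
        (hWVcl.preimage (Continuous.prodMk_right (1/2 : ℝ)))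
    have hx1 : x ∈ {y : Z | ((1/2 : ℝ), y) ∈ V ∧ ((3/4 : ℝ), y) ∈ Wset f A \ V}ᶜ :=
      fun h => h.2.2 (hg.mp h.1)
    have hx2 : x ∈ {y : Z | ((3/4 : ℝ), y) ∈ V ∧ ((1/2 : ℝ), y) ∈ Wset f A \ V}ᶜ :=
      fun h => h.2.2 (hg.mpr h.1)
    have hflt : ∀ᶠ y in 𝓝 x, f y < 2/3 := by
      have hop : IsOpen {y : Z | f y < 2/3} := isOpen_lt hf continuous_const
      have hxm : x ∈ {y : Z | f y < 2/3} := by simp only [mem_setOf_eq]; linarith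
      exact hop.mem_nhds hxm
    filter_upwards [ev_within (hB1.isOpen_compl.mem_nhds hx1),
      ev_within (hB2.isOpen_compl.mem_nhds hx2),
      Filter.Eventually.filter_mono nhdsWithin_le_nhds hflt,
      eventually_mem_nhdsWithin] with y h1 h2 h3 hyA
    constructor
    · intro hyV
      have hfy : 1/3 ≤ f y := (mem_P_half.mp (hVW hyV).1.2).1
      by_contra h34
      exact h1 ⟨hyV, mem_W_tq hf01 hyA hfy, h34⟩
    · intro hyV
      have hfy : 1/3 ≤ f y := (mem_P_tq.mp (hVW hyV).1.2).1
      by_contra h12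
      exact h2 ⟨hyV, mem_W_half hyA hfy (le_of_lt h3), h12⟩
  -- neighborhood glue at level 2/3
  have nglue23 : ∀ x ∈ A, f x = 2/3 →
      ∀ᶠ y in 𝓝[A] x, (((1/4 : ℝ), y) ∈ V ↔ ((1/2 : ℝ), y) ∈ V) := by
    intro x hx hfx
    have hg := glue23 x hx hfx
    have hB1 : IsClosed {y : Z | ((1/4 : ℝ), y) ∈ V ∧ ((1/2 : ℝ), y) ∈ Wset f A \ V} :=
      (hVcl.preimage (Continuous.prodMk_right (1/4 : ℝ))).inter
        (hWVcl.preimage (Continuous.prodMk_right (1/2 : ℝ)))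
    have hB2 : IsClosed {y : Z | ((1/2 : ℝ), y) ∈ V ∧ ((1/4 : ℝ), y) ∈ Wset f A \ V} :=
      (hVcl.preimage (Continuous.prodMk_right (1/2 : ℝ))).inter
        (hWVcl.preimage (Continuous.prodMk_right (1/4 : ℝ)))
    have hx1 : x ∈ {y : Z | ((1/4 : ℝ), y) ∈ V ∧ ((1/2 : ℝ), y) ∈ Wset f A \ V}ᶜ :=
      fun h => h.2.2 (hg.mp h.1)
    have hx2 : x ∈ {y : Z | ((1/2 : ℝ), y) ∈ V ∧ ((1/4 : ℝ), y) ∈ Wset f A \ V}ᶜ :=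
      fun h => h.2.2 (hg.mpr h.1)
    have hflt : ∀ᶠ y in 𝓝 x, 1/3 < f y := by
      have hop : IsOpen {y : Z | 1/3 < f y} := isOpen_lt continuous_const hf
      have hxm : x ∈ {y : Z | 1/3 < f y} := by simp only [mem_setOf_eq]; linarith
      exact hop.mem_nhds hxm
    filter_upwards [ev_within (hB1.isOpen_compl.mem_nhds hx1),
      ev_within (hB2.isOpen_compl.mem_nhds hx2),
      Filter.Eventually.filter_mono nhdsWithin_le_nhds hflt,
      eventually_mem_nhdsWithin] with y h1 h2 h3 hyA
    constructor
    · intro hyV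
      have hfy : f y ≤ 2/3 := (mem_P_quarter.mp (hVW hyV).1.2).2
      by_contra h12
      exact h1 ⟨hyV, mem_W_half hyA (le_of_lt h3) hfy, h12⟩
    · intro hyV
      have hfy : f y ≤ 2/3 := (mem_P_half.mp (hVW hyV).1.2).2
      by_contra h14
      exact h2 ⟨hyV, mem_W_quarter hf01 hyA hfy, h14⟩
  -- main: local constancy of nuV on A
  have hcont : ∀ x ∈ A, ∀ᶠ y in 𝓝[A] x, nuV V y = nuV V x := by
    intro x hx
    have not_half : ∀ y : Z, f y < 1/3 ∨ 2/3 < f y → ((1/2 : ℝ), y) ∉ V := by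
      intro y hy h
      have := mem_P_half.mp (hVW h).1.2
      rcases hy with hy | hy <;> linarith [this.1, this.2]
    have not_q : ∀ y : Z, 2/3 < f y → ((1/4 : ℝ), y) ∉ V := by
      intro y hy h
      have := mem_P_quarter.mp (hVW h).1.2
      linarith [this.2]
    have not_tq : ∀ y : Z, f y < 1/3 → ((3/4 : ℝ), y) ∉ V := by
      intro y hy h
      have := mem_P_tq.mp (hVW h).1.2
      linarith [this.1]
    rcases lt_trichotomy (f x) (1/3) with hx3 | hx3 | hx3
    · -- f x < 1/3
      have hflt : ∀ᶠ y in 𝓝 x, f y < 1/3 := by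
        have hop : IsOpen {y : Z | f y < 1/3} := isOpen_lt hf continuous_const
        have hxm : x ∈ {y : Z | f y < 1/3} := hx3
        exact hop.mem_nhds hxm
      have hev2 := (strand_loc (1/4) x (mem_W_quarter hf01 hx (by linarith)))
      filter_upwards [Filter.Eventually.filter_mono nhdsWithin_le_nhds hflt,
        Filter.Eventually.filter_mono nhdsWithin_le_nhds hev2, eventually_mem_nhdsWithin] with y h1 h2 hyA
      have e1 : sIn V (1/4) y = sIn V (1/4) x :=
        sIn_congr (h2 (mem_W_quarter hf01 hyA (by linarith)))
      simp only [nuV, e1, sIn_false (not_half y (Or.inl h1)), sIn_false (not_tq y h1),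
        sIn_false (not_half x (Or.inl hx3)), sIn_false (not_tq x hx3)]
    · -- f x = 1/3
      have hflt : ∀ᶠ y in 𝓝 x, f y < 2/3 := by
        have hop : IsOpen {y : Z | f y < 2/3} := isOpen_lt hf continuous_const
        have hxm : x ∈ {y : Z | f y < 2/3} := by simp only [mem_setOf_eq]; linarith
        exact hop.mem_nhds hxm
      have hev2 := (strand_loc (1/4) x (mem_W_quarter hf01 hx (by linarith)))
      filter_upwards [Filter.Eventually.filter_mono nhdsWithin_le_nhds hflt,
        Filter.Eventually.filter_mono nhdsWithin_le_nhds hev2, nglue13 x hx hx3,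
        eventually_mem_nhdsWithin] with y h1 h2 h3 hyA
      have e1 : sIn V (1/4) y = sIn V (1/4) x :=
        sIn_congr (h2 (mem_W_quarter hf01 hyA (le_of_lt h1)))
      have e23 : sIn V (1/2) y = sIn V (3/4) y := sIn_congr h3
      have e23x : sIn V (1/2) x = sIn V (3/4) x := sIn_congr (glue13 x hx hx3)
      simp only [nuV, e1, e23, e23x, Bool.xor_self, Bool.xor_false]
    · rcases lt_trichotomy (f x) (2/3) with hx6 | hx6 | hx6
      · -- 1/3 < f x < 2/3
        have hflt : ∀ᶠ y in 𝓝 x, 1/3 < f y ∧ f y < 2/3 := by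
          have hop : IsOpen {y : Z | 1/3 < f y ∧ f y < 2/3} :=
            (isOpen_lt continuous_const hf).inter (isOpen_lt hf continuous_const)
          have hxm : x ∈ {y : Z | 1/3 < f y ∧ f y < 2/3} := ⟨hx3, hx6⟩
          exact hop.mem_nhds hxm
        have hev1 := (strand_loc (1/4) x (mem_W_quarter hf01 hx (by linarith)))
        have hev2 := (strand_loc (1/2) x (mem_W_half hx (by linarith) (by linarith)))
        have hev3 := (strand_loc (3/4) x (mem_W_tq hf01 hx (by linarith)))
        filter_upwards [Filter.Eventually.filter_mono nhdsWithin_le_nhds hflt,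
          Filter.Eventually.filter_mono nhdsWithin_le_nhds hev1, Filter.Eventually.filter_mono nhdsWithin_le_nhds hev2,
          Filter.Eventually.filter_mono nhdsWithin_le_nhds hev3, eventually_mem_nhdsWithin]
          with y h0 h1 h2 h3 hyA
        have e1 : sIn V (1/4) y = sIn V (1/4) x :=
          sIn_congr (h1 (mem_W_quarter hf01 hyA (le_of_lt h0.2)))
        have e2 : sIn V (1/2) y = sIn V (1/2) x :=
          sIn_congr (h2 (mem_W_half hyA (le_of_lt h0.1) (le_of_lt h0.2)))
        have e3 : sIn V (3/4) y = sIn V (3/4) x :=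
          sIn_congr (h3 (mem_W_tq hf01 hyA (le_of_lt h0.1)))
        simp only [nuV, e1, e2, e3]
      · -- f x = 2/3
        have hflt : ∀ᶠ y in 𝓝 x, 1/3 < f y := by
          have hop : IsOpen {y : Z | 1/3 < f y} := isOpen_lt continuous_const hf
          have hxm : x ∈ {y : Z | 1/3 < f y} := by simp only [mem_setOf_eq]; linarith
          exact hop.mem_nhds hxm
        have hev3 := (strand_loc (3/4) x (mem_W_tq hf01 hx (by linarith)))
        filter_upwards [Filter.Eventually.filter_mono nhdsWithin_le_nhds hflt,
          Filter.Eventually.filter_mono nhdsWithin_le_nhds hev3, nglue23 x hx hx6,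
          eventually_mem_nhdsWithin] with y h1 h3 hg hyA
        have e3 : sIn V (3/4) y = sIn V (3/4) x :=
          sIn_congr (h3 (mem_W_tq hf01 hyA (le_of_lt h1)))
        have e12 : sIn V (1/4) y = sIn V (1/2) y := sIn_congr hg
        have e12x : sIn V (1/4) x = sIn V (1/2) x := sIn_congr (glue23 x hx hx6)
        rw [nuV, nuV, e3, e12, e12x, ← Bool.xor_assoc, ← Bool.xor_assoc,
          Bool.xor_self, Bool.xor_self]
      · -- f x > 2/3
        have hflt : ∀ᶠ y in 𝓝 x, 2/3 < f y := by
          have hop : IsOpen {y : Z | 2/3 < f y} := isOpen_lt continuous_const hf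
          have hxm : x ∈ {y : Z | 2/3 < f y} := hx6
          exact hop.mem_nhds hxm
        have hev3 := (strand_loc (3/4) x (mem_W_tq hf01 hx (by linarith)))
        filter_upwards [Filter.Eventually.filter_mono nhdsWithin_le_nhds hflt,
          Filter.Eventually.filter_mono nhdsWithin_le_nhds hev3, eventually_mem_nhdsWithin] with y h1 h3 hyA
        have e3 : sIn V (3/4) y = sIn V (3/4) x :=
          sIn_congr (h3 (mem_W_tq hf01 hyA (by linarith)))
        simp only [nuV, e3, sIn_false (not_half y (Or.inr h1)), sIn_false (not_q y h1),
          sIn_false (not_half x (Or.inr hx6)), sIn_false (not_q x hx6)]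
  -- nuV is constant on A
  have hconst : ∀ x ∈ A, nuV V x = nuV V x₀ := by
    intro x hx
    refine hA.constant (f := nuV V) (fun z hz => ?_) hx hx₀
    have : Filter.Tendsto (fun _ : Z => nuV V z) (nhdsWithin z A) (nhds (nuV V z)) :=
      tendsto_const_nhds
    exact this.congr' (((hcont z hz)).mono fun y hy => hy.symm)
  -- conclusion
  intro x hx
  by_contra hno
  push_neg at hno
  have h0 : nuV V x = false := by
    simp only [nuV, sIn_false (hno (1/4)), sIn_false (hno (1/2)), sIn_false (hno (3/4)),
      Bool.xor_false]
  rw [hconst x hx, hnu] at h0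
  exact Bool.noConfusion h0

theorem comp_onto [CompactSpace Z] (hf : Continuous f) (hf01 : ∀ z, f z ∈ Icc (0:ℝ) 1)
    {A : Set Z} (hAcl : IsClosed A) (hA : IsPreconnected A) {p : ℝ × Z}
    (hp : p ∈ Wset f A) (hfib : ∀ t, (t, p.2) ∈ Xplus f → t = p.1)
    (hq : p.1 = 1/4 ∨ p.1 = 3/4) :
    Prod.snd '' connectedComponentIn (Wset f A) p = A := by
  have hWcl : IsClosed (Wset f A) := by
    have heq : Wset f A = Xplus f ∩ (Prod.snd ⁻¹' A) := rfl
    rw [heq]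
    exact (isClosed_Xplus hf).inter (hAcl.preimage continuous_snd)
  have hWcpt : IsCompact (Wset f A) := by
    refine IsCompact.of_isClosed_subset
      ((isCompact_Icc (a := (0:ℝ)) (b := 1)).prod isCompact_univ) hWcl ?_
    rintro ⟨t, x⟩ h
    exact ⟨h.1.1, trivial⟩
  apply Subset.antisymm
  · rintro _ ⟨w, hw, rfl⟩
    exact (connectedComponentIn_subset _ _ hw).2
  intro x hx
  haveI : CompactSpace (Wset f A) := isCompact_iff_compactSpace.mp hWcpt
  rw [connectedComponentIn_eq_image hp]
  set q : (Wset f A) := ⟨p, hp⟩ with hqdef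
  have key : ∀ U : Set (Wset f A), IsClopen U → q ∈ U →
      ∃ w : (Wset f A), w ∈ U ∧ (w : ℝ × Z).2 = x := by
    intro U hU hqU
    set V : Set (ℝ × Z) := Subtype.val '' U with hVdef
    have hVW : V ⊆ Wset f A := by rintro _ ⟨w, _, rfl⟩; exact w.2
    have hVcl : IsClosed V := (hU.1.isCompact.image continuous_subtype_val).isClosed
    have hWVcl : IsClosed (Wset f A \ V) := by
      have heq : Wset f A \ V = Subtype.val '' Uᶜ := by
        ext z
        constructor
        · rintro ⟨hzW, hzV⟩
          exact ⟨⟨z, hzW⟩, fun hmem => hzV ⟨⟨z, hzW⟩, hmem, rfl⟩, rfl⟩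
        · rintro ⟨w, hw, rfl⟩
          refine ⟨w.2, fun hmem => hw ?_⟩
          obtain ⟨w', hw', hval⟩ := hmem
          exact (Subtype.val_injective hval) ▸ hw'
      rw [heq]
      exact ((hU.2.isClosed_compl).isCompact.image continuous_subtype_val).isClosed
    have hpV : p ∈ V := ⟨q, hqU, rfl⟩
    have hnu : nuV V p.2 = true := by
      rcases hq with hq1 | hq1
      · have h2 : ((1/2 : ℝ), p.2) ∉ V := fun h => by
          have := hfib (1/2) (hVW h).1; rw [hq1] at this; norm_num at this
        have h3 : ((3/4 : ℝ), p.2) ∉ V := fun h => by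
          have := hfib (3/4) (hVW h).1; rw [hq1] at this; norm_num at this
        have h1 : ((1/4 : ℝ), p.2) ∈ V := by rw [← hq1, Prod.mk.eta]; exact hpV
        simp only [nuV, sIn_true h1, sIn_false h2, sIn_false h3, Bool.xor_false]
      · have h1 : ((1/4 : ℝ), p.2) ∉ V := fun h => by
          have := hfib (1/4) (hVW h).1; rw [hq1] at this; norm_num at this
        have h2 : ((1/2 : ℝ), p.2) ∉ V := fun h => by
          have := hfib (1/2) (hVW h).1; rw [hq1] at this; norm_num at this
        have h3 : ((3/4 : ℝ), p.2) ∈ V := by rw [← hq1, Prod.mk.eta]; exact hpV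
        simp only [nuV, sIn_true h3, sIn_false h1, sIn_false h2, Bool.false_xor]
    obtain ⟨t, htV⟩ := parity_onto hf hf01 hA hVW hVcl hWVcl hp.2 hnu x hx
    obtain ⟨w, hwU, hwval⟩ := htV
    exact ⟨w, hwU, by rw [hwval]⟩
  haveI : Nonempty {U : Set (Wset f A) // IsClopen U ∧ q ∈ U} :=
    ⟨⟨univ, isClopen_univ, mem_univ q⟩⟩
  set D : {U : Set (Wset f A) // IsClopen U ∧ q ∈ U} → Set (Wset f A) :=
    fun U => ↑U ∩ {w : (Wset f A) | (w : ℝ × Z).2 = x} with hD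
  have hdir : Directed (· ⊇ ·) D := by
    intro U U'
    refine ⟨⟨(U : Set (Wset f A)) ∩ U', U.2.1.inter U'.2.1, U.2.2, U'.2.2⟩, ?_, ?_⟩
    · exact inter_subset_inter_left _ inter_subset_left
    · exact inter_subset_inter_left _ inter_subset_right
  have hclD : ∀ U, IsClosed (D U) := fun U =>
    (U.2.1.1).inter (isClosed_eq (continuous_snd.comp continuous_subtype_val) continuous_const)
  have hneD : ∀ U, (D U).Nonempty := fun U => by
    obtain ⟨w, hwU, hw2⟩ := key U U.2.1 U.2.2
    exact ⟨w, hwU, hw2⟩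
  obtain ⟨w, hw⟩ := IsCompact.nonempty_iInter_of_directed_nonempty_isCompact_isClosed D hdir hneD
    (fun U => (hclD U).isCompact) hclD
  have hwcc : w ∈ connectedComponent q := by
    rw [connectedComponent_eq_iInter_isClopen q]
    exact mem_iInter.mpr fun U => (mem_iInter.mp hw U).1
  have hw2 : (w : ℝ × Z).2 = x := (mem_iInter.mp hw ⟨univ, isClopen_univ, mem_univ q⟩).2
  exact ⟨w, ⟨w, hwcc, rfl⟩, hw2⟩

end Main

/-- If `C` is the connected component of `X⁺` projecting onto `Z`, then every
nonempty closed connected subset of `Z` is the projection of a connected subset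
of `C`. -/
theorem component_weakly_confluent (Z : Type*) [MetricSpace Z] [CompactSpace Z]
    [ConnectedSpace Z] (f : Z → ℝ) (hf : Continuous f)
    (hf01 : ∀ z, f z ∈ Icc (0:ℝ) 1)
    (C : Set (ℝ × Z)) (hC : ∃ p ∈ Xplus f, C = connectedComponentIn (Xplus f) p)
    (hConto : Prod.snd '' C = univ) :
    ∀ A : Set Z, IsClosed A → IsConnected A →
      ∃ CA : Set (ℝ × Z), CA ⊆ C ∧ IsConnected CA ∧ Prod.snd '' CA = A := by

  obtain ⟨p₀, hp₀X, hCeq⟩ := hC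
  have hCsub : C ⊆ Xplus f := by rw [hCeq]; exact connectedComponentIn_subset _ _
  have hfibC : ∀ x : Z, ∃ t, (t, x) ∈ C := by
    intro x
    have hx : x ∈ Prod.snd '' C := by rw [hConto]; trivial
    obtain ⟨⟨t, x'⟩, hmem, h2⟩ := hx
    cases h2
    exact ⟨t, hmem⟩
  have subC : ∀ S : Set (ℝ × Z), IsPreconnected S → S ⊆ Xplus f →
      ∀ z, z ∈ S → z ∈ C → S ⊆ C := by
    intro S hS hSX z hzS hzC
    have h1 : z ∈ connectedComponentIn (Xplus f) p₀ := by rw [← hCeq]; exact hzC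
    have h2 : connectedComponentIn (Xplus f) p₀ = connectedComponentIn (Xplus f) z :=
      connectedComponentIn_eq h1
    have h3 : S ⊆ connectedComponentIn (Xplus f) z :=
      hS.subset_connectedComponentIn hzS hSX
    rw [hCeq, h2]
    exact h3
  intro A hAcl hAconn
  obtain ⟨hAne, hApre⟩ := hAconn
  by_cases hlow : ∃ x ∈ A, f x < 1/3
  · obtain ⟨xm, hxmA, hxm⟩ := hlow
    obtain ⟨t, htC⟩ := hfibC xm
    have ht : t = 1/4 := P_t_lt_third (hCsub htC).2 hxm
    have hpC : ((1/4 : ℝ), xm) ∈ C := by rw [← ht]; exact htC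
    have hpW : ((1/4 : ℝ), xm) ∈ Wset f A := mem_W_quarter hf01 hxmA (by linarith)
    refine ⟨connectedComponentIn (Wset f A) ((1/4 : ℝ), xm), ?_, ?_, ?_⟩
    · refine subC _ isPreconnected_connectedComponentIn ?_ ((1/4 : ℝ), xm)
        (mem_connectedComponentIn hpW) hpC
      intro w hw
      exact ((connectedComponentIn_subset _ _) hw).1
    · exact isConnected_connectedComponentIn_iff.mpr hpW
    · exact comp_onto hf hf01 hAcl hApre hpW (fun t' ht' => P_t_lt_third ht'.2 hxm) (Or.inl rfl)
  by_cases hhigh : ∃ x ∈ A, 2/3 < f x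
  · obtain ⟨xM, hxMA, hxM⟩ := hhigh
    obtain ⟨t, htC⟩ := hfibC xM
    have ht : t = 3/4 := P_t_gt_twothird (hCsub htC).2 hxM
    have hpC : ((3/4 : ℝ), xM) ∈ C := by rw [← ht]; exact htC
    have hpW : ((3/4 : ℝ), xM) ∈ Wset f A := mem_W_tq hf01 hxMA (by linarith)
    refine ⟨connectedComponentIn (Wset f A) ((3/4 : ℝ), xM), ?_, ?_, ?_⟩
    · refine subC _ isPreconnected_connectedComponentIn ?_ ((3/4 : ℝ), xM)
        (mem_connectedComponentIn hpW) hpC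
      intro w hw
      exact ((connectedComponentIn_subset _ _) hw).1
    · exact isConnected_connectedComponentIn_iff.mpr hpW
    · exact comp_onto hf hf01 hAcl hApre hpW
        (fun t' ht' => P_t_gt_twothird ht'.2 hxM) (Or.inr rfl)
  push_neg at hlow hhigh
  obtain ⟨a₀, ha₀⟩ := hAne
  obtain ⟨t₀, ht₀C⟩ := hfibC a₀
  have ht₀X := hCsub ht₀C
  have mkSection : ∀ c : ℝ, c ∈ Icc (0:ℝ) 1 → (∀ x ∈ A, (c, f x) ∈ Pset) →
      ({c} ×ˢ A ⊆ Xplus f) ∧ IsConnected ({c} ×ˢ A) ∧ Prod.snd '' ({c} ×ˢ A) = A := by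
    intro c hc hall
    refine ⟨?_, isConnected_singleton.prod ⟨⟨a₀, ha₀⟩, hApre⟩,
      snd_image_prod (singleton_nonempty c) A⟩
    rintro ⟨s, x⟩ ⟨hs, hxA⟩
    rw [mem_singleton_iff] at hs
    subst hs
    exact ⟨hc, hall x hxA⟩
  rcases P_cases_t ht₀X.2 with h | h | h | ⟨h1, h2, h3⟩ | ⟨h1, h2, h3⟩
  · have hSec := mkSection (1/4) (by norm_num)
      (fun x hxA => mem_P_quarter.mpr ⟨(hf01 x).1, hhigh x hxA⟩)
    exact ⟨{(1/4 : ℝ)} ×ˢ A,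
      subC _ hSec.2.1.isPreconnected hSec.1 ((1/4 : ℝ), a₀) ⟨rfl, ha₀⟩ (by rw [← h]; exact ht₀C),
      hSec.2.1, hSec.2.2⟩
  · have hSec := mkSection (1/2) (by norm_num)
      (fun x hxA => mem_P_half.mpr ⟨hlow x hxA, hhigh x hxA⟩)
    exact ⟨{(1/2 : ℝ)} ×ˢ A,
      subC _ hSec.2.1.isPreconnected hSec.1 ((1/2 : ℝ), a₀) ⟨rfl, ha₀⟩ (by rw [← h]; exact ht₀C),
      hSec.2.1, hSec.2.2⟩
  · have hSec := mkSection (3/4) (by norm_num)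
      (fun x hxA => mem_P_tq.mpr ⟨hlow x hxA, (hf01 x).2⟩)
    exact ⟨{(3/4 : ℝ)} ×ˢ A,
      subC _ hSec.2.1.isPreconnected hSec.1 ((3/4 : ℝ), a₀) ⟨rfl, ha₀⟩ (by rw [← h]; exact ht₀C),
      hSec.2.1, hSec.2.2⟩
  · -- 1/4 < t₀ < 1/2, f a₀ = 2/3
    have hSec := mkSection (1/4) (by norm_num)
      (fun x hxA => mem_P_quarter.mpr ⟨(hf01 x).1, hhigh x hxA⟩)
    have hseg_sub : Icc (1/4 : ℝ) t₀ ×ˢ ({a₀} : Set Z) ⊆ Xplus f := by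
      rintro ⟨s, x⟩ ⟨hs, hxm⟩
      rw [mem_singleton_iff] at hxm
      subst hxm
      refine ⟨⟨by linarith [hs.1], by linarith [hs.2]⟩, ?_⟩
      rw [h3]
      exact P_seg23 hs.1 (by linarith [hs.2])
    have hseg_conn : IsConnected (Icc (1/4 : ℝ) t₀ ×ˢ ({a₀} : Set Z)) :=
      (isConnected_Icc (by linarith)).prod isConnected_singleton
    have hconn : IsConnected (({(1/4 : ℝ)} ×ˢ A) ∪ (Icc (1/4 : ℝ) t₀ ×ˢ ({a₀} : Set Z))) :=
      IsConnected.union ⟨((1/4 : ℝ), a₀), ⟨rfl, ha₀⟩, ⟨⟨le_refl _, by linarith⟩, rfl⟩⟩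
        hSec.2.1 hseg_conn
    refine ⟨_, subC _ hconn.isPreconnected (union_subset hSec.1 hseg_sub) (t₀, a₀)
      (Or.inr ⟨⟨by linarith, le_refl _⟩, rfl⟩) ht₀C, hconn, ?_⟩
    rw [image_union, hSec.2.2, snd_image_prod (nonempty_Icc.mpr (by linarith)) ({a₀} : Set Z),
      union_eq_self_of_subset_right (singleton_subset_iff.mpr ha₀)]
  · -- 1/2 < t₀ < 3/4, f a₀ = 1/3
    have hSec := mkSection (1/2) (by norm_num)
      (fun x hxA => mem_P_half.mpr ⟨hlow x hxA, hhigh x hxA⟩)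
    have hseg_sub : Icc (1/2 : ℝ) t₀ ×ˢ ({a₀} : Set Z) ⊆ Xplus f := by
      rintro ⟨s, x⟩ ⟨hs, hxm⟩
      rw [mem_singleton_iff] at hxm
      subst hxm
      refine ⟨⟨by linarith [hs.1], by linarith [hs.2]⟩, ?_⟩
      rw [h3]
      exact P_seg13 hs.1 (by linarith [hs.2])
    have hseg_conn : IsConnected (Icc (1/2 : ℝ) t₀ ×ˢ ({a₀} : Set Z)) :=
      (isConnected_Icc (by linarith)).prod isConnected_singleton
    have hconn : IsConnected (({(1/2 : ℝ)} ×ˢ A) ∪ (Icc (1/2 : ℝ) t₀ ×ˢ ({a₀} : Set Z))) :=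
      IsConnected.union ⟨((1/2 : ℝ), a₀), ⟨rfl, ha₀⟩, ⟨⟨le_refl _, by linarith⟩, rfl⟩⟩
        hSec.2.1 hseg_conn
    refine ⟨_, subC _ hconn.isPreconnected (union_subset hSec.1 hseg_sub) (t₀, a₀)
      (Or.inr ⟨⟨by linarith, le_refl _⟩, rfl⟩) ht₀C, hconn, ?_⟩
    rw [image_union, hSec.2.2, snd_image_prod (nonempty_Icc.mpr (by linarith)) ({a₀} : Set Z),
      union_eq_self_of_subset_right (singleton_subset_iff.mpr ha₀)]
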